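/- Let G be a 2-connected matching-covered bipartite graph with bipartition X ⊔ Y. Assume that for every non-edge (x,y) ∈ X × Y there exists a tight subset S ⊆ Y with y ∈ S and x ∉ N_G(S). Let A ⊆ X be an acceptable set. Then for every x ∈ A there exists a tight subset R ⊆ A with x ∈ R. -/

import Mathlib

attribute [local instance] Classical.propDecidable

/-- `X ⊔ Y` is a bipartition of the graph `G`. -/
def IsBipartition {V : Type*} (G : SimpleGraph V) [Fintype V] (X Y : Finset V) : Prop :=
  Disjoint X Y ∧ X ∪ Y = Finset.univ ∧
    ∀ x y : V, G.Adj x y → (x ∈ X ∧ y ∈ Y) ∨ (x ∈ Y ∧ y ∈ X)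

/-- `G` is connected and every edge of `G` lies in a perfect matching. -/
def MatchingCovered {V : Type*} (G : SimpleGraph V) : Prop :=
  G.Connected ∧ ∀ e ∈ G.edgeSet, ∃ M : G.Subgraph, M.IsPerfectMatching ∧ e ∈ M.edgeSet

/-- `G` is connected and remains connected after deleting any single vertex. -/
def TwoConnected {V : Type*} (G : SimpleGraph V) : Prop :=
  G.Connected ∧ ∀ v : V, (G.induce {u : V | u ≠ v}).Connected

/-- The neighborhood of the vertex set `A` in `G`. -/
noncomputable def nbhd {V : Type*} [Fintype V] (G : SimpleGraph V) (A : Finset V) : Finset V :=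
  Finset.univ.filter (fun y => ∃ x ∈ A, G.Adj x y)

/-- `T` is a tight subset: `|N_G(T)| = |T| + 1`. -/
def Tight {V : Type*} [Fintype V] (G : SimpleGraph V) (T : Finset V) : Prop :=
  (nbhd G T).card = T.card + 1

/-- `T ⊆ X` is an acceptable set of the bipartite graph `G` with bipartition `X ⊔ Y`:
the graph induced by the edges between `T` and `N_G(T)` is connected, and the induced
subgraph on `(X \ T) ⊔ (Y \ N_G(T))` is connected with at least one edge. -/
def Acceptable {V : Type*} [Fintype V] (G : SimpleGraph V) (X Y T : Finset V) : Prop :=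
  T.Nonempty ∧ T ⊆ X ∧
    (G.induce (↑(T ∪ nbhd G T) : Set V)).Connected ∧
    (G.induce (↑((X \ T) ∪ (Y \ nbhd G T)) : Set V)).Connected ∧
    ∃ x ∈ X \ T, ∃ y ∈ Y \ nbhd G T, G.Adj x y

/-!
Put `B = Y \ N(A)`; the graph `H` induced on `(X \ A) ∪ B` is connected. By uncrossing, the tight
sets `S ⊆ Y` with `x ∉ N(S)` are closed under unions whose neighbourhoods meet, and the separation
hypothesis supplies one through every vertex of `B`. Hence a largest such set through a vertex of
`B` spreads along every edge of `H`, so that `H ⊆ S ∪ N(S)`. Then `R = X \ N(S)` lies in `A`,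
contains `x`, and `|N(R)| ≤ |Y \ S| = |R| + 1`, which strict Hall turns into an equality.
-/

open Finset

section

variable {V : Type*} {G : SimpleGraph V} {X Y S T : Finset V}

lemma SimpleGraph.Subgraph.IsPerfectMatching.card_le_card {M : G.Subgraph}
    (hM : M.IsPerfectMatching) (h : ∀ u ∈ S, ∀ v, M.Adj u v → v ∈ T) : #S ≤ #T :=
  card_le_card_of_forall_subsingleton M.Adj
    (fun u hu => let ⟨v, hv, _⟩ := isPerfectMatching_iff.1 hM u; ⟨v, h u hu v hv, hv⟩)
    (fun _ _ _ hu₁ _ hu₂ => hM.1.eq_of_adj_right hu₁.2 hu₂.2)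

variable [Fintype V]

def StrictHall (G : SimpleGraph V) (X : Finset V) : Prop :=
  ∀ T ⊆ X, T.Nonempty → T ≠ X → #T + 1 ≤ #(nbhd G T)

lemma mem_nbhd {y : V} : y ∈ nbhd G S ↔ ∃ x ∈ S, G.Adj x y := by
  simp [nbhd]

lemma nbhd_mono (h : S ⊆ T) : nbhd G S ⊆ nbhd G T := fun _ hy =>
  let ⟨x, hx, hxy⟩ := mem_nbhd.1 hy
  mem_nbhd.2 ⟨x, h hx, hxy⟩

lemma nbhd_union : nbhd G (S ∪ T) = nbhd G S ∪ nbhd G T := by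
  ext y
  simp only [mem_nbhd, mem_union, or_and_right, exists_or]

lemma nbhd_inter_subset : nbhd G (S ∩ T) ⊆ nbhd G S ∩ nbhd G T :=
  subset_inter (nbhd_mono inter_subset_left) (nbhd_mono inter_subset_right)

lemma Tight.nonempty (h : Tight G S) : S.Nonempty := by
  rw [nonempty_iff_ne_empty]
  rintro rfl
  simp [Tight, nbhd] at h

namespace IsBipartition

lemma symm (h : IsBipartition G X Y) : IsBipartition G Y X :=
  ⟨h.1.symm, union_comm X Y ▸ h.2.1, fun x y hxy => (h.2.2 x y hxy).symm⟩

lemma mem_right (h : IsBipartition G X Y) {x y : V} (hx : x ∈ X) (hxy : G.Adj x y) : y ∈ Y :=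
  ((h.2.2 x y hxy).resolve_right fun hx' => disjoint_left.1 h.1 hx hx'.1).2

lemma not_adj (h : IsBipartition G X Y) {x x' : V} (hx : x ∈ X) (hx' : x' ∈ X) :
    ¬ G.Adj x x' := fun hxx' => disjoint_left.1 h.1 hx' (h.mem_right hx hxx')

lemma nbhd_subset (h : IsBipartition G X Y) (hS : S ⊆ X) : nbhd G S ⊆ Y := fun _ hy =>
  let ⟨_, hx, hxy⟩ := mem_nbhd.1 hy
  h.mem_right (hS hx) hxy

end IsBipartition

lemma IsBipartition.card_eq {M : G.Subgraph} (h : IsBipartition G X Y)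
    (hM : M.IsPerfectMatching) : #X = #Y :=
  (hM.card_le_card fun _ hu _ hv => h.mem_right hu (M.adj_sub hv)).antisymm
    (hM.card_le_card fun _ hu _ hv => h.symm.mem_right hu (M.adj_sub hv))

/-- By connectivity there is an edge `ab` with `a ∈ N(T)` and `b ∈ X \ T`; a perfect matching
through `ab` matches `T` into `N(T) \ {a}`. -/
lemma MatchingCovered.strictHall (hmc : MatchingCovered G) (hbip : IsBipartition G X Y) :
    StrictHall G X := by
  intro T hTX ⟨t, ht⟩ hTne
  obtain ⟨x', hx'X, hx'T⟩ := exists_of_ssubset (hTX.ssubset_of_ne hTne)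
  have hx' : x' ∉ (↑(T ∪ nbhd G T) : Set V) := by
    simp only [coe_union, Set.mem_union, mem_coe, not_or]
    exact ⟨hx'T, fun h => disjoint_left.1 hbip.1 hx'X (hbip.nbhd_subset hTX h)⟩
  obtain ⟨w⟩ := hmc.1.preconnected t x'
  obtain ⟨⟨⟨a, b⟩, hab⟩, -, ha, hb⟩ := w.exists_boundary_dart _ (by simp [ht]) hx'
  simp only [coe_union, Set.mem_union, mem_coe, not_or] at ha hb
  have hab : G.Adj a b := hab
  have haN : a ∈ nbhd G T := ha.resolve_left fun haT => hb.2 (mem_nbhd.2 ⟨a, haT, hab⟩)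
  obtain ⟨M, hM, habM⟩ := hmc.2 s(a, b) hab
  have habM : M.Adj a b := habM
  have hmatch : #T ≤ #((nbhd G T).erase a) := hM.card_le_card fun u hu v huv =>
    mem_erase.2 ⟨fun hva => hb.1 (hM.1.eq_of_adj_left (hva ▸ huv.symm) habM ▸ hu),
      mem_nbhd.2 ⟨u, hu, M.adj_sub huv⟩⟩
  have := card_erase_add_one haN
  omega

/-- Uncrossing: the neighbourhood of `S ∩ T` lies in `N(S) ∩ N(T)`, which is non-empty even when
`S ∩ T` is empty. -/
lemma StrictHall.tight_union (hY : StrictHall G Y) (hSY : S ⊆ Y) (hTY : T ⊆ Y)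
    (hS : Tight G S) (hT : Tight G T) (hST : (nbhd G S ∩ nbhd G T).Nonempty)
    (hne : S ∪ T ≠ Y) : Tight G (S ∪ T) := by
  have hunion : #(S ∪ T) + 1 ≤ #(nbhd G (S ∪ T)) :=
    hY _ (union_subset hSY hTY) (hS.nonempty.mono subset_union_left) hne
  have hinter : #(S ∩ T) + 1 ≤ #(nbhd G S ∩ nbhd G T) := by
    rcases (S ∩ T).eq_empty_or_nonempty with h | h
    · simpa [h] using hST.card_pos
    · refine (hY _ (inter_subset_left.trans hSY) h fun hY' => hne ?_).trans
        (card_le_card nbhd_inter_subset)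
      exact subset_antisymm (union_subset hSY hTY) (hY' ▸ inter_subset_union)
  have := card_union_add_card_inter S T
  have := card_union_add_card_inter (nbhd G S) (nbhd G T)
  unfold Tight at *
  rw [nbhd_union] at hunion ⊢
  omega

lemma tight_sdiff_nbhd (hbip : IsBipartition G X Y) (hXY : #X = #Y) (hX : StrictHall G X)
    (hSY : S ⊆ Y) (hS : Tight G S) (hne : (X \ nbhd G S).Nonempty) :
    Tight G (X \ nbhd G S) := by
  have hNS : nbhd G S ⊆ X := hbip.symm.nbhd_subset hSY
  have hNR : nbhd G (X \ nbhd G S) ⊆ Y \ S := fun y hy => by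
    obtain ⟨x, hx, hxy⟩ := mem_nbhd.1 hy
    exact mem_sdiff.2 ⟨hbip.mem_right (mem_sdiff.1 hx).1 hxy,
      fun hyS => (mem_sdiff.1 hx).2 (mem_nbhd.2 ⟨y, hyS, hxy.symm⟩)⟩
  have hRX : X \ nbhd G S ≠ X := by
    obtain ⟨z, hz⟩ := card_pos.1 (hS.symm ▸ Nat.succ_pos _ : 0 < #(nbhd G S))
    exact fun h => (mem_sdiff.1 (h.symm ▸ hNS hz : z ∈ X \ nbhd G S)).2 hz
  have := hX _ sdiff_subset hne hRX
  have := card_le_card hNR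
  have := card_sdiff_add_card_eq_card hNS
  have := card_sdiff_add_card_eq_card hSY
  unfold Tight at *
  omega

/-- A largest tight set `S ∋ y₀` avoiding `x` absorbs every vertex of a connected `W` meeting it:
at an edge `ab` of `W` leaving `S ∪ N(S)` with `a ∈ N(S)`, the tight set through `b` avoiding `x`
uncrosses with `S` into a larger one. -/
lemma exists_tight_avoiding_of_connected (hbip : IsBipartition G X Y) (hY : StrictHall G Y)
    {x : V} (hxY : x ∈ nbhd G Y)
    (hsep : ∀ y ∈ Y, ¬ G.Adj x y → ∃ S : Finset V, S ⊆ Y ∧ Tight G S ∧ y ∈ S ∧ x ∉ nbhd G S)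
    {W : Finset V} (hW : (G.induce (W : Set V)).Connected) (hWx : ∀ w ∈ W, ¬ G.Adj x w)
    {y₀ : V} (hy₀W : y₀ ∈ W) (hy₀Y : y₀ ∈ Y) :
    ∃ S ⊆ Y, Tight G S ∧ x ∉ nbhd G S ∧ W ⊆ S ∪ nbhd G S := by
  set F := Y.powerset.filter fun S => Tight G S ∧ x ∉ nbhd G S ∧ y₀ ∈ S
  obtain ⟨S₀, hS₀Y, hS₀, hy₀S₀, hxS₀⟩ := hsep y₀ hy₀Y (hWx y₀ hy₀W)
  obtain ⟨S, hSF, hmax⟩ := F.exists_max_image card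
    ⟨S₀, mem_filter.2 ⟨mem_powerset.2 hS₀Y, hS₀, hxS₀, hy₀S₀⟩⟩
  obtain ⟨hSY, hS, hxS, hy₀S⟩ := mem_filter.1 hSF
  rw [mem_powerset] at hSY
  refine ⟨S, hSY, hS, hxS, fun w hw => ?_⟩
  by_contra hwS
  obtain ⟨p⟩ := hW.preconnected ⟨y₀, hy₀W⟩ ⟨w, hw⟩
  obtain ⟨⟨⟨a, b⟩, hab⟩, -, ha, hb⟩ :=
    p.exists_boundary_dart {u : (W : Set V) | (u : V) ∈ S ∪ nbhd G S} (by simp [hy₀S]) hwS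
  simp only [Set.mem_ofPred_eq, mem_union, not_or] at ha hb
  have hab : G.Adj a b := hab
  have haN : ↑a ∈ nbhd G S := ha.resolve_left fun haS => hb.2 (mem_nbhd.2 ⟨a, haS, hab⟩)
  have hbY : ↑b ∈ Y := hbip.mem_right (hbip.symm.nbhd_subset hSY haN) hab
  obtain ⟨S₂, hS₂Y, hS₂, hbS₂, hxS₂⟩ := hsep b hbY (hWx b b.2)
  have hxU : x ∉ nbhd G (S ∪ S₂) := by
    rw [nbhd_union, mem_union]
    exact not_or.2 ⟨hxS, hxS₂⟩
  have hU : Tight G (S ∪ S₂) :=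
    hY.tight_union hSY hS₂Y hS hS₂ ⟨a, mem_inter.2 ⟨haN, mem_nbhd.2 ⟨b, hbS₂, hab.symm⟩⟩⟩
      fun h => hxU (h ▸ hxY)
  have hlt : #S < #(S ∪ S₂) :=
    card_lt_card (ssubset_iff_of_subset subset_union_left |>.2 ⟨b, mem_union_right _ hbS₂, hb.1⟩)
  exact (hmax _ (mem_filter.2 ⟨mem_powerset.2 (union_subset hSY hS₂Y), hU, hxU,
    mem_union_left _ hy₀S⟩)).not_gt hlt

end

theorem stmt12_general {V : Type*} [Fintype V] (G : SimpleGraph V) (X Y : Finset V)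
    (hbip : IsBipartition G X Y) (hmc : MatchingCovered G)
    (hsep : ∀ x ∈ X, ∀ y ∈ Y, ¬ G.Adj x y →
      ∃ S : Finset V, S ⊆ Y ∧ Tight G S ∧ y ∈ S ∧ x ∉ nbhd G S)
    (A : Finset V) (hA : Acceptable G X Y A) :
    ∀ x ∈ A, ∃ R : Finset V, R ⊆ A ∧ Tight G R ∧ x ∈ R := by
  intro x hx
  obtain ⟨-, hAX, -, hW, x₀, hx₀, y₀, hy₀, h₀⟩ := hA
  have hxX := hAX hx
  have hxY : x ∈ nbhd G Y := by
    have : Nontrivial V := ⟨⟨x₀, y₀, G.ne_of_adj h₀⟩⟩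
    obtain ⟨y, hxy⟩ := hmc.1.preconnected.exists_adj_of_nontrivial x
    exact mem_nbhd.2 ⟨y, hbip.mem_right hxX hxy, hxy.symm⟩
  have hWx : ∀ w ∈ (X \ A) ∪ (Y \ nbhd G A), ¬ G.Adj x w := by
    simp only [mem_union, mem_sdiff]
    rintro w (⟨hwX, -⟩ | ⟨-, hwA⟩) hxw
    exacts [hbip.not_adj hxX hwX hxw, hwA (mem_nbhd.2 ⟨x, hx, hxw⟩)]
  obtain ⟨S, hSY, hS, hxS, hWS⟩ := exists_tight_avoiding_of_connected hbip
    (hmc.strictHall hbip.symm) hxY (hsep x hxX) hW hWx (mem_union_right _ hy₀) (mem_sdiff.1 hy₀).1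
  have hRA : X \ nbhd G S ⊆ A := fun r hr => by
    by_contra hrA
    obtain ⟨hrX, hrS⟩ := mem_sdiff.1 hr
    rcases mem_union.1 (hWS (mem_union_left _ (mem_sdiff.2 ⟨hrX, hrA⟩))) with h | h
    exacts [disjoint_left.1 hbip.1 hrX (hSY h), hrS h]
  obtain ⟨M, hM, -⟩ := hmc.2 s(x₀, y₀) h₀
  have hxR : x ∈ X \ nbhd G S := mem_sdiff.2 ⟨hxX, hxS⟩
  exact ⟨_, hRA, tight_sdiff_nbhd hbip (hbip.card_eq hM) (hmc.strictHall hbip) hSY hS ⟨x, hxR⟩,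
    hxR⟩

theorem stmt12 {V : Type*} [Fintype V] (G : SimpleGraph V) (X Y : Finset V)
    (hbip : IsBipartition G X Y) (hmc : MatchingCovered G) (h2 : TwoConnected G)
    (hsep : ∀ x ∈ X, ∀ y ∈ Y, ¬ G.Adj x y →
      ∃ S : Finset V, S ⊆ Y ∧ Tight G S ∧ y ∈ S ∧ x ∉ nbhd G S)
    (A : Finset V) (hA : Acceptable G X Y A) :
    ∀ x ∈ A, ∃ R : Finset V, R ⊆ A ∧ Tight G R ∧ x ∈ R :=
  stmt12_general G X Y hbip hmc hsep A hA
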